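/- arXiv:2106.15140 — 4 statements merged into one kernel-verified Lean document; each statement's English description precedes it below -/
import Mathlib

section
/- Suppose z_j^{2N} ≠ 1 for pairwise distinct nonzero z_1,...,z_M, and let g_k := ω^k f̂_k = Σ_{j=1}^M a_j/(ω^{-k} - z_j) with a_j := γ_j(1 - z_j^{2N}) ≠ 0, where ω = e^{-2πi/(2N)}. For any partition S ∪ Γ = {0,...,2N-1} with |S| = M+1, the Loewner matrix L = ((g_ℓ - g_k)/(ω^{-ℓ} - ω^{-k}))_{ℓ∈Γ, k∈S} factorizes as L = C_Γ · diag(γ_j(z_j^{2N}-1)) · C_S^T, where C_Γ = (1/(ω^{-ℓ} - z_j))_{ℓ∈Γ, j} and C_S = (1/(ω^{-k} - z_j))_{k∈S, j} are Cauchy matrices. -/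
/-!
Over a full period the DFT of `k ↦ γ z ^ k` is a geometric sum, so `g` is the rational function
`x ↦ ∑ j, γ j * (1 - z j ^ (2N)) / (x - z j)` sampled at the nodes `x = ω⁻¹ ^ k`. The divided
difference of `x ↦ a / (x - w)` between two nodes `x, y` is `1 / (x - w) * (-a) * (1 / (y - w))`,
one Cauchy term per pole, and summing over the poles is the matrix product. The nodes indexed by
the disjoint sets `S` and `Γ` are distinct because `ω⁻¹` is a primitive `2N`-th root of unity, and
no node hits a pole because `z j ^ (2N) ≠ 1`.
-/

open Finset Matrix

theorem mul_geom_sum_eq_div_inv_sub {K : Type*} [Field K] {n : ℕ} {x z : K}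
    (hx : x ^ n = 1) (hz : z ^ n ≠ 1) :
    x * ∑ ℓ ∈ range n, (z * x) ^ ℓ = (1 - z ^ n) / (x⁻¹ - z) := by
  have hn : n ≠ 0 := by rintro rfl; exact hz (pow_zero z)
  have hx0 : x ≠ 0 := by rintro rfl; exact zero_ne_one ((zero_pow hn).symm.trans hx)
  have hzx : z * x - 1 ≠ 0 := fun h => hz <| by
    simpa [mul_pow, hx] using congrArg (· ^ n) (sub_eq_zero.mp h)
  have hxz : x⁻¹ - z ≠ 0 := fun h => hzx <| by
    rw [← sub_eq_zero.mp h, inv_mul_cancel₀ hx0, sub_self]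
  rw [geom_sum_eq (sub_ne_zero.mp hzx), mul_pow, hx, mul_one, eq_div_iff hxz, mul_comm x,
    mul_assoc, mul_sub, mul_inv_cancel₀ hx0, div_mul_eq_mul_div, div_eq_iff hzx]
  ring

theorem pow_mul_dft_exp_sum_eq_sum_div {K ι : Type*} [Field K] [Fintype ι] {n : ℕ} {ω : K}
    (hω : ω ^ n = 1) (γ z : ι → K) (hz : ∀ j, z j ^ n ≠ 1) (k : ℕ) :
    ω ^ k * ∑ ℓ ∈ range n, (∑ j, γ j * z j ^ ℓ) * ω ^ (k * ℓ) =
      ∑ j, γ j * (1 - z j ^ n) / (ω⁻¹ ^ k - z j) := by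
  have hωk : (ω ^ k) ^ n = 1 := by rw [pow_right_comm, hω, one_pow]
  simp only [sum_mul, mul_sum]
  rw [sum_comm]
  refine sum_congr rfl fun j _ => ?_
  rw [inv_pow, mul_div_assoc, ← mul_geom_sum_eq_div_inv_sub hωk (hz j), mul_sum, mul_sum]
  refine sum_congr rfl fun ℓ _ => ?_
  rw [mul_pow, pow_mul]
  ring

theorem sum_div_sub_sum_div_div_sub {K ι : Type*} [Field K] [Fintype ι] (a w : ι → K) {x y : K}
    (hxy : x ≠ y) (hx : ∀ j, x ≠ w j) (hy : ∀ j, y ≠ w j) :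
    (∑ j, a j / (x - w j) - ∑ j, a j / (y - w j)) / (x - y) =
      ∑ j, 1 / (x - w j) * -a j * (1 / (y - w j)) := by
  rw [← sum_sub_distrib, sum_div]
  refine sum_congr rfl fun j _ => ?_
  have := sub_ne_zero.mpr hxy
  have := sub_ne_zero.mpr (hx j)
  have := sub_ne_zero.mpr (hy j)
  field_simp
  ring

theorem isPrimitiveRoot_exp_neg (n : ℕ) (hn : n ≠ 0) :
    IsPrimitiveRoot (Complex.exp (-(2 * Real.pi * Complex.I) / n)) n := by
  rw [neg_div, Complex.exp_neg]
  exact (Complex.isPrimitiveRoot_exp n hn).inv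

theorem loewner_cauchy_factorization_general (M N : ℕ)
    (γ z : Fin M → ℂ) (hz2N : ∀ j, z j ^ (2 * N) ≠ 1)
    (ω : ℂ) (hω : ω = Complex.exp (-(2 * Real.pi * Complex.I) / (2 * (N : ℂ))))
    (f fhat g : ℕ → ℂ)
    (hf : ∀ k, f k = ∑ j, γ j * z j ^ k)
    (hfhat : ∀ m, fhat m = ∑ ℓ ∈ Finset.range (2 * N), f ℓ * ω ^ (m * ℓ))
    (hg : ∀ k, g k = ω ^ k * fhat k)
    (S Γ : Finset (Fin (2 * N))) (hdisj : Disjoint S Γ)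
    (L : Matrix ↥Γ ↥S ℂ)
    (hL : ∀ ℓ k, L ℓ k = (g ℓ.1.1 - g k.1.1) / (ω⁻¹ ^ ℓ.1.1 - ω⁻¹ ^ k.1.1))
    (CΓ : Matrix ↥Γ (Fin M) ℂ) (hCΓ : ∀ ℓ j, CΓ ℓ j = 1 / (ω⁻¹ ^ ℓ.1.1 - z j))
    (CS : Matrix ↥S (Fin M) ℂ) (hCS : ∀ k j, CS k j = 1 / (ω⁻¹ ^ k.1.1 - z j)) :
    L = CΓ * Matrix.diagonal (fun j => γ j * (z j ^ (2 * N) - 1)) * CSᵀ := by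
  ext ℓ k
  have hprim : IsPrimitiveRoot ω (2 * N) := by
    rw [hω]
    exact_mod_cast isPrimitiveRoot_exp_neg (2 * N) (Fin.pos ℓ.1).ne'
  have hg_poles : ∀ n, g n = ∑ j, γ j * (1 - z j ^ (2 * N)) / (ω⁻¹ ^ n - z j) := fun n => by
    simp only [hg, hfhat, hf]
    exact pow_mul_dft_exp_sum_eq_sum_div hprim.pow_eq_one γ z hz2N n
  have hpole : ∀ n j, ω⁻¹ ^ n ≠ z j := fun n j h => hz2N j <| by
    rw [← h, ← pow_mul, mul_comm, pow_mul, hprim.inv.pow_eq_one, one_pow]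
  have hnodes : ω⁻¹ ^ ℓ.1.1 ≠ ω⁻¹ ^ k.1.1 := fun h =>
    disjoint_right.mp hdisj ℓ.2 (Fin.ext (hprim.inv.pow_inj ℓ.1.2 k.1.2 h) ▸ k.2)
  rw [hL, hg_poles, hg_poles, sum_div_sub_sum_div_div_sub _ _ hnodes (hpole _) (hpole _), mul_apply]
  simp only [mul_diagonal, transpose_apply, hCΓ, hCS]
  exact sum_congr rfl fun j _ => by ring

theorem loewner_cauchy_factorization (M N : ℕ) (hMN : M < N)
    (γ z : Fin M → ℂ) (hγ : ∀ j, γ j ≠ 0) (hz0 : ∀ j, z j ≠ 0)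
    (hzinj : Function.Injective z) (hz2N : ∀ j, z j ^ (2 * N) ≠ 1)
    (ω : ℂ) (hω : ω = Complex.exp (-(2 * Real.pi * Complex.I) / (2 * (N : ℂ))))
    (f fhat g : ℕ → ℂ)
    (hf : ∀ k, f k = ∑ j, γ j * z j ^ k)
    (hfhat : ∀ m, fhat m = ∑ ℓ ∈ Finset.range (2 * N), f ℓ * ω ^ (m * ℓ))
    (hg : ∀ k, g k = ω ^ k * fhat k)
    (S Γ : Finset (Fin (2 * N))) (hdisj : Disjoint S Γ)
    (hunion : S ∪ Γ = Finset.univ) (hScard : S.card = M + 1)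
    (L : Matrix ↥Γ ↥S ℂ)
    (hL : ∀ ℓ k, L ℓ k = (g ℓ.1.1 - g k.1.1) / (ω⁻¹ ^ ℓ.1.1 - ω⁻¹ ^ k.1.1))
    (CΓ : Matrix ↥Γ (Fin M) ℂ) (hCΓ : ∀ ℓ j, CΓ ℓ j = 1 / (ω⁻¹ ^ ℓ.1.1 - z j))
    (CS : Matrix ↥S (Fin M) ℂ) (hCS : ∀ k j, CS k j = 1 / (ω⁻¹ ^ k.1.1 - z j)) :
    L = CΓ * Matrix.diagonal (fun j => γ j * (z j ^ (2 * N) - 1)) * CSᵀ :=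
  loewner_cauchy_factorization_general M N γ z hz2N ω hω f fhat g hf hfhat hg S Γ hdisj L hL CΓ hCΓ
    CS hCS
end

section
/- With notation as above (Loewner matrix L of rank M, size (2N-M-1)×(M+1)), any nonzero kernel vector w of L satisfies C_S^T w = 0 where C_S = (1/(ω^{-k} - z_j))_{j=1..M, k∈S} is the M×(M+1) Cauchy matrix, and every component of w is nonzero. -/
open Finset Matrix Polynomial

/-!
With `ζ = ω⁻¹` a primitive `2N`-th root of unity, summing geometric series gives
`g m = ∑ j, d j / (z j - ζ ^ m)` with `d j = γ j * (z j ^ (2N) - 1)`, so the Loewner matrix factors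
as `L = C_Γ * diagonal d * C_Sᵀ`. A Cauchy matrix with distinct nodes and at least as many rows as
columns is injective: a kernel vector divided by the barycentric weights is the value vector of an
interpolating polynomial of too small a degree vanishing at all row nodes. This applies to `C_Γ`,
which has `2N - M - 1 ≥ M` rows, and to the `M` columns of `C_Sᵀ` left after dropping a zero
entry of `w`.
-/

section CauchyMatrix

variable {F : Type*} [Field F]

theorem eq_zero_of_forall_sum_div_sub_eq_zero {ι : Type*} {s : Finset ι} {p : ι → F}
    (hp : Set.InjOn p s) {T : Finset F} (hcard : #s ≤ #T) (hT : ∀ t ∈ T, ∀ i ∈ s, t ≠ p i)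
    {c : ι → F} (hc : ∀ t ∈ T, ∑ i ∈ s, c i / (t - p i) = 0) : ∀ i ∈ s, c i = 0 := by
  classical
  set r : ι → F := fun i => c i / Lagrange.nodalWeight s p i
  have hinterp : Lagrange.interpolate s p r = 0 := by
    refine eq_zero_of_degree_lt_of_eval_finset_eq_zero T
      ((Lagrange.degree_interpolate_lt r hp).trans_le (by exact_mod_cast hcard)) fun t ht => ?_
    rw [Lagrange.eval_interpolate_not_at_node r (hT t ht), mul_eq_zero]
    refine Or.inr ((sum_congr rfl fun i hi => ?_).trans (hc t ht))
    have := Lagrange.nodalWeight_ne_zero hp hi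
    simp only [r]
    field_simp
  intro i hi
  have hri := Lagrange.eval_interpolate_at_node r hp hi
  rw [hinterp, eval_zero, eq_comm, div_eq_zero_iff] at hri
  exact hri.resolve_right (Lagrange.nodalWeight_ne_zero hp hi)

def cauchyMatrix {m n : Type*} (x : m → F) (y : n → F) : Matrix m n F :=
  of fun i j => 1 / (x i - y j)

variable {m n : Type*} {x : m → F} {y : n → F}

theorem cauchyMatrix_mulVec_apply [Fintype n] (v : n → F) (i : m) :
    (cauchyMatrix x y *ᵥ v) i = ∑ j, v j / (x i - y j) := by
  simp only [cauchyMatrix, mulVec, dotProduct, of_apply, one_div, inv_mul_eq_div]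

theorem eq_zero_of_cauchyMatrix_mulVec_eq_zero_of_apply_eq_zero [Fintype m] [Fintype n]
    (hx : Function.Injective x) (hy : Function.Injective y) (hxy : ∀ i j, x i ≠ y j) {v : n → F}
    (hv : cauchyMatrix x y *ᵥ v = 0) (k : n) (hcard : Fintype.card n ≤ Fintype.card m + 1)
    (hk : v k = 0) : v = 0 := by
  classical
  have hsum (i : m) : ∑ j ∈ univ.erase k, v j / (x i - y j) = 0 := by
    rw [sum_erase _ (by rw [hk, zero_div]), ← cauchyMatrix_mulVec_apply, hv, Pi.zero_apply]
  funext j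
  by_cases hjk : j = k
  · rw [hjk, hk, Pi.zero_apply]
  refine eq_zero_of_forall_sum_div_sub_eq_zero hy.injOn (T := univ.image x) ?_ ?_ ?_ j
    (mem_erase.mpr ⟨hjk, mem_univ j⟩)
  · rw [card_erase_of_mem (mem_univ k), card_image_of_injective _ hx, card_univ, card_univ]
    omega
  · simpa using fun i j _ => hxy i j
  · simpa using hsum

theorem eq_zero_of_cauchyMatrix_mulVec_eq_zero [Fintype m] [Fintype n]
    (hx : Function.Injective x) (hy : Function.Injective y) (hxy : ∀ i j, x i ≠ y j) {v : n → F}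
    (hv : cauchyMatrix x y *ᵥ v = 0) (hcard : Fintype.card n ≤ Fintype.card m) : v = 0 := by
  classical
  refine funext fun j => eq_zero_of_forall_sum_div_sub_eq_zero hy.injOn (T := univ.image x)
    ?_ ?_ ?_ j (mem_univ j)
  · rwa [card_image_of_injective _ hx, card_univ, card_univ]
  · simpa using fun i j => hxy i j
  · simpa [cauchyMatrix_mulVec_apply] using fun i => congrFun hv i

theorem cauchyMatrix_transpose : (cauchyMatrix x y)ᵀ = -cauchyMatrix y x := by
  ext j i
  simp only [cauchyMatrix, transpose_apply, Matrix.neg_apply, of_apply]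
  rw [← neg_sub, div_neg]

theorem loewner_eq_cauchyMatrix_mul_diagonal_mul_transpose {ι : Type*} [Fintype ι]
    [DecidableEq ι] {L : Matrix m n F} {a : m → F} {b : n → F} {z d : ι → F}
    (hab : ∀ i k, a i ≠ b k) (ha : ∀ i j, a i ≠ z j) (hb : ∀ k j, b k ≠ z j)
    (hL : ∀ i k, L i k = (∑ j, d j / (z j - a i) - ∑ j, d j / (z j - b k)) / (a i - b k)) :
    L = cauchyMatrix a z * diagonal d * (cauchyMatrix b z)ᵀ := by
  ext i k
  rw [hL, ← sum_sub_distrib, sum_div, mul_apply]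
  refine sum_congr rfl fun j _ => ?_
  have := sub_ne_zero.mpr (hab i k)
  have := sub_ne_zero.mpr (ha i j)
  have := sub_ne_zero.mpr (hb k j)
  have := sub_ne_zero.mpr (ha i j).symm
  have := sub_ne_zero.mpr (hb k j).symm
  simp only [cauchyMatrix, mul_diagonal, transpose_apply, of_apply]
  field_simp
  ring

end CauchyMatrix

section RootsOfUnity

variable {F : Type*} [Field F]

theorem pow_ne_of_pow_eq_one {ζ z : F} {n : ℕ} (hζ : ζ ^ n = 1) (hz : z ^ n ≠ 1) (m : ℕ) :
    ζ ^ m ≠ z := by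
  rintro rfl
  exact hz (by rw [pow_right_comm, hζ, one_pow])

theorem inv_pow_mul_sum_pow_mul_inv_pow {ζ z : F} {n : ℕ} (hζ : ζ ^ n = 1) (hz : z ^ n ≠ 1)
    (m : ℕ) : ζ⁻¹ ^ m * ∑ ℓ ∈ range n, z ^ ℓ * ζ⁻¹ ^ (m * ℓ) = (z ^ n - 1) / (z - ζ ^ m) := by
  have hn : n ≠ 0 := by rintro rfl; exact hz (pow_zero z)
  have hζ0 : ζ ≠ 0 := by rintro rfl; exact zero_ne_one (by rwa [zero_pow hn] at hζ)
  have hzζ : z - ζ ^ m ≠ 0 := sub_ne_zero.mpr (pow_ne_of_pow_eq_one hζ hz m).symm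
  have hq : z * ζ⁻¹ ^ m ≠ 1 := by
    rw [inv_pow, ← div_eq_mul_inv, Ne, div_eq_one_iff_eq (pow_ne_zero _ hζ0)]
    exact fun h => hzζ (sub_eq_zero.mpr h)
  have hqn : (z * ζ⁻¹ ^ m) ^ n = z ^ n := by rw [mul_pow, ← pow_mul, pow_mul', inv_pow, hζ]; simp
  calc ζ⁻¹ ^ m * ∑ ℓ ∈ range n, z ^ ℓ * ζ⁻¹ ^ (m * ℓ)
      = ζ⁻¹ ^ m * ∑ ℓ ∈ range n, (z * ζ⁻¹ ^ m) ^ ℓ := by simp_rw [mul_pow, pow_mul]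
    _ = (z ^ n - 1) / (z - ζ ^ m) := by
      have hden : z * ζ⁻¹ ^ m - 1 ≠ 0 := sub_ne_zero.mpr hq
      rw [geom_sum_eq hq, hqn, mul_div_assoc', div_eq_div_iff hden hzζ]
      have hu : ζ ^ m * ζ⁻¹ ^ m = 1 := by rw [← mul_pow, mul_inv_cancel₀ hζ0, one_pow]
      linear_combination (1 - z ^ n) * hu

theorem inv_pow_mul_dft_sum_mul_pow {ι : Type*} [Fintype ι] {ζ : F} {n : ℕ}
    (hζ : ζ ^ n = 1) (γ z : ι → F) (hz : ∀ j, z j ^ n ≠ 1) (m : ℕ) :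
    ζ⁻¹ ^ m * ∑ ℓ ∈ range n, (∑ j, γ j * z j ^ ℓ) * ζ⁻¹ ^ (m * ℓ) =
      ∑ j, γ j * (z j ^ n - 1) / (z j - ζ ^ m) := by
  simp_rw [sum_mul, mul_assoc]
  rw [sum_comm, mul_sum]
  refine sum_congr rfl fun j _ => ?_
  rw [← mul_sum, mul_left_comm, inv_pow_mul_sum_pow_mul_inv_pow hζ (hz j), mul_div_assoc]

end RootsOfUnity

theorem isPrimitiveRoot_inv_exp_neg_two_pi_I_div (n : ℕ) (hn : n ≠ 0) :
    IsPrimitiveRoot (Complex.exp (-(2 * Real.pi * Complex.I) / n))⁻¹ n := by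
  rw [← Complex.exp_neg, neg_div, neg_neg]
  exact Complex.isPrimitiveRoot_exp n hn

theorem loewner_kernel_vector_general (M N : ℕ) (hMN : M < N)
    (γ z : Fin M → ℂ) (hγ : ∀ j, γ j ≠ 0)
    (hzinj : Function.Injective z) (hz2N : ∀ j, z j ^ (2 * N) ≠ 1)
    (ω : ℂ) (hω : ω = Complex.exp (-(2 * Real.pi * Complex.I) / (2 * (N : ℂ))))
    (f fhat g : ℕ → ℂ)
    (hf : ∀ k, f k = ∑ j, γ j * z j ^ k)
    (hfhat : ∀ m, fhat m = ∑ ℓ ∈ Finset.range (2 * N), f ℓ * ω ^ (m * ℓ))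
    (hg : ∀ k, g k = ω ^ k * fhat k)
    (S Γ : Finset (Fin (2 * N))) (hdisj : Disjoint S Γ)
    (hunion : S ∪ Γ = Finset.univ) (hScard : S.card = M + 1)
    (L : Matrix ↥Γ ↥S ℂ)
    (hL : ∀ ℓ k, L ℓ k = (g ℓ.1.1 - g k.1.1) / (ω⁻¹ ^ ℓ.1.1 - ω⁻¹ ^ k.1.1))
    (Cs : Matrix (Fin M) ↥S ℂ) (hCs : ∀ j k, Cs j k = 1 / (ω⁻¹ ^ k.1.1 - z j))
    (w : ↥S → ℂ) (hw : L.mulVec w = 0) (hw0 : w ≠ 0) :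
    Cs.mulVec w = 0 ∧ ∀ k, w k ≠ 0 := by
  have hζ : IsPrimitiveRoot ω⁻¹ (2 * N) := by
    rw [hω]; exact_mod_cast isPrimitiveRoot_inv_exp_neg_two_pi_I_div (2 * N) (by omega)
  set ζ := ω⁻¹
  have hζz (k : Fin (2 * N)) (j : Fin M) : ζ ^ (k : ℕ) ≠ z j :=
    pow_ne_of_pow_eq_one hζ.pow_eq_one (hz2N j) k
  have hζinj : Function.Injective fun k : Fin (2 * N) => ζ ^ (k : ℕ) :=
    fun a b h => Fin.ext (hζ.pow_inj a.2 b.2 h)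
  set d : Fin M → ℂ := fun j => γ j * (z j ^ (2 * N) - 1)
  have hg_eq (m : ℕ) : g m = ∑ j, d j / (z j - ζ ^ m) := by
    rw [hg, hfhat, ← inv_inv ω]
    simp only [hf]
    exact inv_pow_mul_dft_sum_mul_pow hζ.pow_eq_one γ z hz2N m
  set xS : S → ℂ := fun k => ζ ^ (k : ℕ)
  set xΓ : Γ → ℂ := fun ℓ => ζ ^ (ℓ : ℕ)
  have hxS : Function.Injective xS := hζinj.comp Subtype.val_injective
  have hxΓ : Function.Injective xΓ := hζinj.comp Subtype.val_injective
  have hCs_eq : Cs = (cauchyMatrix xS z)ᵀ := Matrix.ext hCs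
  have hL_eq : L = cauchyMatrix xΓ z * diagonal d * Cs := by
    refine hCs_eq ▸ loewner_eq_cauchyMatrix_mul_diagonal_mul_transpose
      (fun ℓ k h => disjoint_left.mp hdisj k.2 (hζinj h ▸ ℓ.2)) (fun ℓ j => hζz ℓ j)
      (fun k j => hζz k j) fun ℓ k => ?_
    rw [hL, hg_eq, hg_eq]
  have hCsw : Cs *ᵥ w = 0 := by
    have hcard : #S + #Γ = 2 * N := by
      rw [← card_union_of_disjoint hdisj, hunion, card_univ, Fintype.card_fin]
    have hdCsw := eq_zero_of_cauchyMatrix_mulVec_eq_zero hxΓ hzinj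
      (fun ℓ j => hζz ℓ j) (by rwa [hL_eq, ← mulVec_mulVec, ← mulVec_mulVec] at hw)
      (by simp only [Fintype.card_fin, Fintype.card_coe]; omega)
    funext j
    have hdj : d j ≠ 0 := mul_ne_zero (hγ j) (sub_ne_zero.mpr (hz2N j))
    simpa [mulVec_diagonal, hdj] using congrFun hdCsw j
  refine ⟨hCsw, fun k hk => hw0 ?_⟩
  refine eq_zero_of_cauchyMatrix_mulVec_eq_zero_of_apply_eq_zero hzinj hxS
    (fun j k => (hζz k j).symm) ?_ k (by simp [hScard]) hk
  rwa [hCs_eq, cauchyMatrix_transpose, neg_mulVec, neg_eq_zero] at hCsw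

theorem loewner_kernel_vector (M N : ℕ) (hMN : M < N)
    (γ z : Fin M → ℂ) (hγ : ∀ j, γ j ≠ 0) (hz0 : ∀ j, z j ≠ 0)
    (hzinj : Function.Injective z) (hz2N : ∀ j, z j ^ (2 * N) ≠ 1)
    (ω : ℂ) (hω : ω = Complex.exp (-(2 * Real.pi * Complex.I) / (2 * (N : ℂ))))
    (f fhat g : ℕ → ℂ)
    (hf : ∀ k, f k = ∑ j, γ j * z j ^ k)
    (hfhat : ∀ m, fhat m = ∑ ℓ ∈ Finset.range (2 * N), f ℓ * ω ^ (m * ℓ))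
    (hg : ∀ k, g k = ω ^ k * fhat k)
    (S Γ : Finset (Fin (2 * N))) (hdisj : Disjoint S Γ)
    (hunion : S ∪ Γ = Finset.univ) (hScard : S.card = M + 1)
    (L : Matrix ↥Γ ↥S ℂ)
    (hL : ∀ ℓ k, L ℓ k = (g ℓ.1.1 - g k.1.1) / (ω⁻¹ ^ ℓ.1.1 - ω⁻¹ ^ k.1.1))
    (Cs : Matrix (Fin M) ↥S ℂ) (hCs : ∀ j k, Cs j k = 1 / (ω⁻¹ ^ k.1.1 - z j))
    (w : ↥S → ℂ) (hw : L.mulVec w = 0) (hw0 : w ≠ 0) :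
    Cs.mulVec w = 0 ∧ ∀ k, w k ≠ 0 :=
  loewner_kernel_vector_general M N hMN γ z hγ hzinj hz2N ω hω f fhat g hf hfhat hg S Γ hdisj hunion
    hScard L hL Cs hCs w hw hw0
end

section
/- Let f_k = Σ_{j=1}^M γ_j z_j^k (z_j nonzero, pairwise distinct, γ_j ≠ 0, M < N), f̂ its length-2N DFT, S ∪ Γ a partition of {0,...,2N-1} with |S| = M+1, u⁽¹⁾ = (ω^{-ℓ})_{ℓ∈Γ}, u⁽²⁾ = (ω^{-k})_{k∈S}. Then the Loewner matrix L = ((ω^ℓ f̂_ℓ - ω^k f̂_k)/(ω^{-ℓ} - ω^{-k}))_{ℓ∈Γ,k∈S} satisfies L = Q_{2N-M-1,2N-M}(u⁽¹⁾) · H_{2N-M,M+1} · Q_{M+1,M+1}(u⁽²⁾)^T, where H_{2N-M,M+1} = (f_{ℓ+k})_{ℓ=0..2N-M-1, k=0..M}; consequently rank L = rank H = M. (No assumption z_j^{2N} ≠ 1 is needed.) -/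
/-!
Let `P_ℓ = ∏_{n ∈ Γ, n ≠ ℓ} (X - u_n)` and `P_k = ∏_{n ∈ S, n ≠ k} (X - u_n)`, the polynomials whose
coefficient rows form `Q₁` and `Q₂`. Since `S ∪ Γ` indexes all `2N`-th roots of unity,
`(X - u_ℓ) P_ℓ (X - u_k) P_k = X^{2N} - 1`, hence `(u_ℓ - u_k) P_ℓ P_k = G(u_ℓ) - G(u_k)` with
`G(c) = (X^{2N} - 1) / (X - c) = ∑_t c^{2N-1-t} X^t`. The functional `p ↦ ∑_j γ_j p(z_j)` sends
`X^t` to `f_t`; it maps `G(ω^{-m})` to `ω^m f̂_m`, and `P_ℓ P_k` to `(Q₁ H Q₂ᵀ)_{ℓk}` because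
`H = V diag(γ) Wᵀ` with Vandermonde factors `V, W`.

For the ranks, `Q₁ V`, `Q₂ W`, `V` and `W` are matrices of values `p_i(z_j)` of families of
polynomials spanning all polynomials of degree `< M` (by Lagrange interpolation, as `|Γ| ≥ M` and
`|S| = M + 1`), so their columns are independent, and `A diag(γ) Bᵀ` then has rank `M`.
-/

open Finset Matrix Polynomial Lagrange

variable {R K : Type*} [CommRing R] [Field K]

section EvalMatrix

variable {m m' n : Type*}

def evalMatrix (p : m → R[X]) (z : n → R) : Matrix m n R :=
  of fun i j => (p i).eval (z j)

theorem evalMatrix_mul_diagonal_mul_transpose_apply [Fintype n] [DecidableEq n]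
    (p : m → R[X]) (q : m' → R[X]) (γ z : n → R) (i : m) (k : m') :
    (evalMatrix p z * diagonal γ * (evalMatrix q z)ᵀ) i k
      = ∑ j, γ j * ((p i).eval (z j) * (q k).eval (z j)) := by
  rw [mul_apply]
  simp only [mul_diagonal, transpose_apply, evalMatrix, of_apply]
  exact sum_congr rfl fun j _ => by ring

theorem mul_evalMatrix_X_pow [Fintype m] {a : ℕ} {Q : Matrix m (Fin a) R} {p : m → R[X]}
    (hQ : ∀ i r, Q i r = (p i).coeff r) (hp : ∀ i, (p i).natDegree < a) (z : n → R) :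
    Q * evalMatrix (fun r : Fin a => X ^ (r : ℕ)) z = evalMatrix p z := by
  ext i j
  simp only [mul_apply, evalMatrix, of_apply, eval_pow, eval_X, hQ]
  rw [Fin.sum_univ_eq_sum_range (fun r => (p i).coeff r * z j ^ r), ← eval_eq_sum_range' (hp i)]

theorem hankel_eq_evalMatrix [Fintype n] [DecidableEq n] {a b : ℕ}
    {H : Matrix (Fin a) (Fin b) R} {γ z : n → R}
    (hH : ∀ r s, H r s = ∑ j, γ j * z j ^ ((r : ℕ) + s)) :
    H = evalMatrix (fun r : Fin a => X ^ (r : ℕ)) z * diagonal γ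
      * (evalMatrix (fun s : Fin b => X ^ (s : ℕ)) z)ᵀ := by
  ext r s
  rw [hH, evalMatrix_mul_diagonal_mul_transpose_apply]
  simp only [eval_pow, eval_X, pow_add]

theorem mul_hankel_mul_transpose_eq [Fintype m] [Fintype m'] [Fintype n] [DecidableEq n]
    {a b : ℕ} {Q : Matrix m (Fin a) R} {Q' : Matrix m' (Fin b) R} {p : m → R[X]} {q : m' → R[X]}
    (hQ : ∀ i r, Q i r = (p i).coeff r) (hp : ∀ i, (p i).natDegree < a)
    (hQ' : ∀ k s, Q' k s = (q k).coeff s) (hq : ∀ k, (q k).natDegree < b)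
    {H : Matrix (Fin a) (Fin b) R} {γ z : n → R}
    (hH : ∀ r s, H r s = ∑ j, γ j * z j ^ ((r : ℕ) + s)) :
    Q * H * Q'ᵀ = evalMatrix p z * diagonal γ * (evalMatrix q z)ᵀ := by
  rw [hankel_eq_evalMatrix hH, ← mul_evalMatrix_X_pow hQ hp, ← mul_evalMatrix_X_pow hQ' hq,
    transpose_mul]
  simp only [Matrix.mul_assoc]

theorem injective_mulVecLin_evalMatrix [Fintype n] [DecidableEq n] {p : m → K[X]} {z : n → K}
    (hz : Function.Injective z)
    (hp : degreeLT K (Fintype.card n) ≤ Submodule.span K (Set.range p)) :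
    Function.Injective (evalMatrix p z).mulVecLin := by
  rw [← LinearMap.ker_eq_bot, LinearMap.ker_eq_bot']
  intro c hc
  let φ : K[X] →ₗ[K] K := ∑ j, c j • leval (z j)
  have hφ : Submodule.span K (Set.range p) ≤ LinearMap.ker φ := by
    rw [Submodule.span_le]
    rintro _ ⟨i, rfl⟩
    simpa [φ, evalMatrix, mulVec, dotProduct, mul_comm] using congrFun hc i
  funext j
  have hbasis : Lagrange.basis univ z j ∈ degreeLT K (Fintype.card n) := by
    rw [mem_degreeLT, degree_basis hz.injOn (mem_univ j), card_univ]
    exact WithBot.coe_lt_coe.2 (Nat.sub_lt (Fintype.card_pos_iff.2 ⟨j⟩) one_pos)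
  have hφj : φ (Lagrange.basis univ z j) = c j := by
    simp only [φ, LinearMap.sum_apply, LinearMap.smul_apply, leval_apply, smul_eq_mul]
    rw [sum_eq_single j (fun i _ hij => by rw [eval_basis_of_ne hij.symm (mem_univ i), mul_zero])
      (by simp), eval_basis_self hz.injOn (mem_univ j), mul_one]
  rw [← hφj, Pi.zero_apply]
  exact hφ (hp hbasis)

end EvalMatrix

section Rank

variable {m m' n : Type*} [Fintype m'] [Fintype n]

theorem rank_mul_transpose_of_injective {A : Matrix m n K} {B : Matrix m' n K}
    (hA : Function.Injective A.mulVecLin) (hB : Function.Injective B.mulVecLin) :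
    (A * Bᵀ).rank = Fintype.card n := by
  have hBt : LinearMap.range Bᵀ.mulVecLin = ⊤ := by
    apply Submodule.eq_top_of_finrank_eq
    change Bᵀ.rank = _
    rw [rank_transpose, rank, LinearMap.finrank_range_of_inj hB]
  rw [rank, mulVecLin_mul, LinearMap.range_comp_of_range_eq_top _ hBt,
    LinearMap.finrank_range_of_inj hA, Module.finrank_fintype_fun_eq_card]

theorem injective_mulVecLin_mul_diagonal [DecidableEq n] {A : Matrix m n K} {d : n → K}
    (hA : Function.Injective A.mulVecLin) (hd : ∀ j, d j ≠ 0) :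
    Function.Injective (A * diagonal d).mulVecLin := by
  rw [mulVecLin_mul, LinearMap.coe_comp]
  refine hA.comp fun x y hxy => funext fun j => mul_left_cancel₀ (hd j) ?_
  simpa [mulVec_diagonal] using congrFun hxy j

theorem rank_evalMatrix_mul_diagonal_mul_transpose [DecidableEq n] {p : m → K[X]}
    {q : m' → K[X]} {γ z : n → K} (hz : Function.Injective z)
    (hp : degreeLT K (Fintype.card n) ≤ Submodule.span K (Set.range p))
    (hq : degreeLT K (Fintype.card n) ≤ Submodule.span K (Set.range q)) (hγ : ∀ j, γ j ≠ 0) :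
    (evalMatrix p z * diagonal γ * (evalMatrix q z)ᵀ).rank = Fintype.card n :=
  rank_mul_transpose_of_injective
    (injective_mulVecLin_mul_diagonal (injective_mulVecLin_evalMatrix hz hp) hγ)
    (injective_mulVecLin_evalMatrix hz hq)

end Rank

theorem degreeLT_le_span_X_pow {k a : ℕ} (h : k ≤ a) :
    degreeLT R k ≤ Submodule.span R (Set.range fun r : Fin a => (X : R[X]) ^ (r : ℕ)) := by
  classical
  rw [degreeLT_eq_span_X_pow]
  refine Submodule.span_mono ?_
  simp only [coe_image, coe_range, Set.image_subset_iff]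
  exact fun r hr => ⟨⟨r, by simp at hr; omega⟩, rfl⟩

section Nodal

variable {ι : Type*} [DecidableEq ι]

noncomputable def nodalErase (T : Finset ι) (u : ι → R) (ℓ : T) : R[X] :=
  nodal (univ.erase ℓ) fun i : T => u i

theorem natDegree_nodalErase [Nontrivial R] (T : Finset ι) (u : ι → R) (ℓ : T) :
    (nodalErase T u ℓ).natDegree = T.card - 1 := by
  rw [nodalErase, natDegree_nodal, card_erase_of_mem (mem_univ ℓ), card_univ, Fintype.card_coe]

theorem X_sub_C_mul_nodalErase (T : Finset ι) (u : ι → R) (ℓ : T) :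
    (X - C (u ℓ)) * nodalErase T u ℓ = nodal T u := by
  rw [nodalErase, nodal_eq, nodal_eq]
  exact (mul_prod_erase univ (fun i : T => X - C (u i)) (mem_univ ℓ)).trans
    (prod_coe_sort T fun i => X - C (u i))

theorem degreeLT_le_span_nodalErase {T : Finset ι} {u : ι → K} (hu : Set.InjOn u T) :
    degreeLT K T.card ≤ Submodule.span K (Set.range (nodalErase T u)) := by
  have hv : Function.Injective fun i : T => u i := fun a b h => Subtype.ext (hu a.2 b.2 h)
  intro q hq
  have hdeg : q.degree < (univ : Finset T).card := by
    rw [card_univ, Fintype.card_coe]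
    exact mem_degreeLT.1 hq
  rw [eq_interpolate (f := q) hv.injOn hdeg, interpolate_apply]
  refine Submodule.sum_mem _ fun i _ => ?_
  rw [basis_eq_prod_sub_inv_mul_nodal_div (mem_univ i), ← nodal_erase_eq_nodal_div (mem_univ i),
    ← mul_assoc, ← C_mul, C_mul']
  exact Submodule.smul_mem _ _ (Submodule.subset_span ⟨i, rfl⟩)

end Nodal

section Loewner

theorem geom_sum₂_X_mul_X_sub_C {n : ℕ} {x c : R} (hx : x ^ n = c) :
    (∑ t ∈ range n, X ^ t * C x ^ (n - 1 - t)) * (X - C x) = X ^ n - C c := by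
  rw [geom_sum₂_mul, ← C_pow, hx]

variable [IsDomain R]

theorem C_sub_mul_mul_eq_geom_sum₂_sub {n : ℕ} {a b c : R} {p q : R[X]}
    (h : (X - C a) * p * ((X - C b) * q) = X ^ n - C c) :
    C (a - b) * (p * q)
      = ∑ t ∈ range n, X ^ t * C a ^ (n - 1 - t) - ∑ t ∈ range n, X ^ t * C b ^ (n - 1 - t) := by
  have ha : a ^ n = c := by simpa [sub_eq_zero, eq_comm] using congrArg (eval a) h
  have hb : b ^ n = c := by simpa [sub_eq_zero, eq_comm] using congrArg (eval b) h
  -- after multiplying by `(X - C a) * (X - C b)`, both sides equal `(a - b) * (X ^ n - C c)`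
  apply mul_left_cancel₀ (mul_ne_zero (X_sub_C_ne_zero a) (X_sub_C_ne_zero b))
  rw [C_sub]
  linear_combination (C a - C b) * h - (X - C b) * geom_sum₂_X_mul_X_sub_C ha
    + (X - C a) * geom_sum₂_X_mul_X_sub_C hb

theorem sub_mul_sum_mul_eval_mul_eval {κ : Type*} [Fintype κ] {n : ℕ} {a b c : R} {p q : R[X]}
    (h : (X - C a) * p * ((X - C b) * q) = X ^ n - C c) {γ z : κ → R} {f : ℕ → R}
    (hf : ∀ t, f t = ∑ j, γ j * z j ^ t) :
    (a - b) * ∑ j, γ j * (p.eval (z j) * q.eval (z j))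
      = ∑ t ∈ range n, f t * a ^ (n - 1 - t) - ∑ t ∈ range n, f t * b ^ (n - 1 - t) := by
  have heval : ∀ x, (a - b) * (p.eval x * q.eval x)
      = ∑ t ∈ range n, x ^ t * a ^ (n - 1 - t) - ∑ t ∈ range n, x ^ t * b ^ (n - 1 - t) := by
    intro x
    simpa [eval_finsetSum] using congrArg (eval x) (C_sub_mul_mul_eq_geom_sum₂_sub h)
  calc (a - b) * ∑ j, γ j * (p.eval (z j) * q.eval (z j))
      = ∑ j, γ j * ((a - b) * (p.eval (z j) * q.eval (z j))) := by
        rw [mul_sum]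
        exact sum_congr rfl fun j _ => mul_left_comm _ _ _
    _ = ∑ j, γ j * (∑ t ∈ range n, z j ^ t * a ^ (n - 1 - t)
          - ∑ t ∈ range n, z j ^ t * b ^ (n - 1 - t)) := by simp only [heval]
    _ = _ := by
        simp only [hf, sum_mul, mul_sub, mul_sum, sum_sub_distrib, mul_assoc]
        rw [sum_comm (s := range n), sum_comm (s := range n)]

theorem sub_mul_evalMatrix_nodalErase_apply {ι κ : Type*} [Fintype ι] [DecidableEq ι]
    [Fintype κ] [DecidableEq κ] {u : ι → R} {n : ℕ} {c : R} (hnodal : nodal univ u = X ^ n - C c)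
    {S Γ : Finset ι} (hdisj : Disjoint S Γ) (hunion : S ∪ Γ = univ)
    {γ z : κ → R} {f : ℕ → R} (hf : ∀ t, f t = ∑ j, γ j * z j ^ t) (ℓ : Γ) (k : S) :
    (u ℓ - u k) * (evalMatrix (nodalErase Γ u) z * diagonal γ
        * (evalMatrix (nodalErase S u) z)ᵀ) ℓ k
      = ∑ t ∈ range n, f t * u ℓ ^ (n - 1 - t) - ∑ t ∈ range n, f t * u k ^ (n - 1 - t) := by
  rw [evalMatrix_mul_diagonal_mul_transpose_apply]
  refine sub_mul_sum_mul_eval_mul_eval (c := c) ?_ hf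
  rw [X_sub_C_mul_nodalErase, X_sub_C_mul_nodalErase, nodal_eq, nodal_eq, mul_comm,
    ← prod_union hdisj, hunion, ← nodal_eq, hnodal]

end Loewner

theorem sum_mul_inv_pow_pow_eq {ω : K} {n : ℕ} (hω : ω ^ n = 1) (f : ℕ → K) (m : ℕ) :
    ∑ t ∈ range n, f t * (ω⁻¹ ^ m) ^ (n - 1 - t) = ω ^ m * ∑ t ∈ range n, f t * ω ^ (m * t) := by
  rw [mul_sum]
  refine sum_congr rfl fun t ht => ?_
  have hinv : (ω⁻¹ ^ m) ^ (n - 1 - t) = ω ^ (m * (t + 1)) := by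
    rw [← pow_mul, inv_pow]
    refine inv_eq_of_mul_eq_one_left ?_
    rw [← pow_add, ← mul_add, show t + 1 + (n - 1 - t) = n by simp at ht; omega, mul_comm,
      pow_mul, hω, one_pow]
  rw [hinv, mul_add_one, pow_add]
  ring

theorem IsPrimitiveRoot.nodal_pow_eq [IsDomain R] {ζ : R} {n : ℕ} (hζ : IsPrimitiveRoot ζ n)
    (hn : 0 < n) : nodal univ (fun i : Fin n => ζ ^ (i : ℕ)) = X ^ n - C 1 := by
  rw [X_pow_sub_C_eq_prod hζ hn (one_pow _), nodal_eq, ← Fin.prod_univ_eq_prod_range]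
  simp

theorem Complex.isPrimitiveRoot_inv_exp_neg {n : ℕ} (hn : n ≠ 0) :
    IsPrimitiveRoot (exp (-(2 * Real.pi * I) / n))⁻¹ n := by
  rw [← exp_neg, neg_div, neg_neg]
  exact isPrimitiveRoot_exp n hn

theorem loewner_hankel_factorization_general (M N : ℕ) (hMN : M < N)
    (γ z : Fin M → ℂ) (hγ : ∀ j, γ j ≠ 0)
    (hzinj : Function.Injective z)
    (ω : ℂ) (hω : ω = Complex.exp (-(2 * Real.pi * Complex.I) / (2 * (N : ℂ))))
    (f fhat : ℕ → ℂ)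
    (hf : ∀ k, f k = ∑ j, γ j * z j ^ k)
    (hfhat : ∀ m, fhat m = ∑ ℓ ∈ Finset.range (2 * N), f ℓ * ω ^ (m * ℓ))
    (S Γ : Finset (Fin (2 * N))) (hdisj : Disjoint S Γ)
    (hunion : S ∪ Γ = Finset.univ) (hScard : S.card = M + 1)
    (L : Matrix ↥Γ ↥S ℂ)
    (hL : ∀ ℓ k, L ℓ k
      = (ω ^ ℓ.1.1 * fhat ℓ.1.1 - ω ^ k.1.1 * fhat k.1.1) / (ω⁻¹ ^ ℓ.1.1 - ω⁻¹ ^ k.1.1))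
    (H : Matrix (Fin (2 * N - M)) (Fin (M + 1)) ℂ)
    (hH : ∀ ℓ k, H ℓ k = f ((ℓ : ℕ) + (k : ℕ)))
    (Q1 : Matrix ↥Γ (Fin (2 * N - M)) ℂ)
    (hQ1 : ∀ ℓ r, Q1 ℓ r
      = (∏ n ∈ Finset.univ.erase ℓ, (Polynomial.X - Polynomial.C (ω⁻¹ ^ n.1.1))).coeff (r : ℕ))
    (Q2 : Matrix ↥S (Fin (M + 1)) ℂ)
    (hQ2 : ∀ k r, Q2 k r
      = (∏ n ∈ Finset.univ.erase k, (Polynomial.X - Polynomial.C (ω⁻¹ ^ n.1.1))).coeff (r : ℕ)) :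
    L = Q1 * H * Q2ᵀ ∧ L.rank = M ∧ H.rank = M := by
  have hprim : IsPrimitiveRoot ω⁻¹ (2 * N) := by
    rw [hω]
    exact_mod_cast Complex.isPrimitiveRoot_inv_exp_neg (n := 2 * N) (by omega)
  let u : Fin (2 * N) → ℂ := fun n => ω⁻¹ ^ (n : ℕ)
  have hu : Function.Injective u := fun a b h => Fin.ext (hprim.pow_inj a.2 b.2 h)
  have hΓ : Γ.card = 2 * N - (M + 1) := by
    have := card_union_of_disjoint hdisj
    rw [hunion, card_univ, Fintype.card_fin] at this
    omega
  have hH' : ∀ r s, H r s = ∑ j, γ j * z j ^ ((r : ℕ) + s) := fun r s => (hH r s).trans (hf _)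
  have hfactor : Q1 * H * Q2ᵀ
      = evalMatrix (nodalErase Γ u) z * diagonal γ * (evalMatrix (nodalErase S u) z)ᵀ :=
    mul_hankel_mul_transpose_eq (p := nodalErase Γ u) (q := nodalErase S u) hQ1
      (fun ℓ => by rw [natDegree_nodalErase]; omega) hQ2
      (fun k => by rw [natDegree_nodalErase]; omega) hH'
  have hLoewner : L = Q1 * H * Q2ᵀ := by
    ext ℓ k
    have hne : u ℓ - u k ≠ 0 :=
      sub_ne_zero.2 (hu.ne fun h => disjoint_left.1 hdisj k.2 (h ▸ ℓ.2))
    have hω1 : ω ^ (2 * N) = 1 := by simpa using hprim.inv.pow_eq_one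
    rw [hL, hfactor, eq_comm, eq_div_iff hne, mul_comm _ (u ℓ - u k),
      sub_mul_evalMatrix_nodalErase_apply (hprim.nodal_pow_eq (by omega)) hdisj hunion hf,
      sum_mul_inv_pow_pow_eq hω1, sum_mul_inv_pow_pow_eq hω1, hfhat, hfhat]
  have hspan : ∀ T : Finset (Fin (2 * N)), M ≤ T.card →
      degreeLT ℂ (Fintype.card (Fin M)) ≤ Submodule.span ℂ (Set.range (nodalErase T u)) :=
    fun T hT => (degreeLT_mono (by simpa using hT)).trans (degreeLT_le_span_nodalErase hu.injOn)
  refine ⟨hLoewner, ?_, ?_⟩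
  · rw [hLoewner, hfactor, rank_evalMatrix_mul_diagonal_mul_transpose hzinj
      (hspan Γ (by omega)) (hspan S (by omega)) hγ, Fintype.card_fin]
  · rw [hankel_eq_evalMatrix hH', rank_evalMatrix_mul_diagonal_mul_transpose hzinj
      (degreeLT_le_span_X_pow (by simp; omega)) (degreeLT_le_span_X_pow (by simp)) hγ,
      Fintype.card_fin]

theorem loewner_hankel_factorization (M N : ℕ) (hMN : M < N)
    (γ z : Fin M → ℂ) (hγ : ∀ j, γ j ≠ 0) (hz0 : ∀ j, z j ≠ 0)
    (hzinj : Function.Injective z)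
    (ω : ℂ) (hω : ω = Complex.exp (-(2 * Real.pi * Complex.I) / (2 * (N : ℂ))))
    (f fhat : ℕ → ℂ)
    (hf : ∀ k, f k = ∑ j, γ j * z j ^ k)
    (hfhat : ∀ m, fhat m = ∑ ℓ ∈ Finset.range (2 * N), f ℓ * ω ^ (m * ℓ))
    (S Γ : Finset (Fin (2 * N))) (hdisj : Disjoint S Γ)
    (hunion : S ∪ Γ = Finset.univ) (hScard : S.card = M + 1)
    (L : Matrix ↥Γ ↥S ℂ)
    (hL : ∀ ℓ k, L ℓ k
      = (ω ^ ℓ.1.1 * fhat ℓ.1.1 - ω ^ k.1.1 * fhat k.1.1) / (ω⁻¹ ^ ℓ.1.1 - ω⁻¹ ^ k.1.1))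
    (H : Matrix (Fin (2 * N - M)) (Fin (M + 1)) ℂ)
    (hH : ∀ ℓ k, H ℓ k = f ((ℓ : ℕ) + (k : ℕ)))
    (Q1 : Matrix ↥Γ (Fin (2 * N - M)) ℂ)
    (hQ1 : ∀ ℓ r, Q1 ℓ r
      = (∏ n ∈ Finset.univ.erase ℓ, (Polynomial.X - Polynomial.C (ω⁻¹ ^ n.1.1))).coeff (r : ℕ))
    (Q2 : Matrix ↥S (Fin (M + 1)) ℂ)
    (hQ2 : ∀ k r, Q2 k r
      = (∏ n ∈ Finset.univ.erase k, (Polynomial.X - Polynomial.C (ω⁻¹ ^ n.1.1))).coeff (r : ℕ)) :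
    L = Q1 * H * Q2ᵀ ∧ L.rank = M ∧ H.rank = M :=
  loewner_hankel_factorization_general M N hMN γ z hγ hzinj ω hω f fhat hf hfhat S Γ hdisj hunion
    hScard L hL H hH Q1 hQ1 Q2 hQ2
end

section
/- The Hankel matrix pencil z·H(0) - H(1), where H(0) = (f_{k+ℓ})_{ℓ=0..2N-L-1,k=0..L-1} and H(1) = (f_{k+ℓ+1})_{ℓ=0..2N-L-1,k=0..L-1} with f_k = Σ_{j=1}^M γ_j z_j^k (M ≤ L ≤ N, γ_j ≠ 0, z_j pairwise distinct nonzero), has the property that for each j, rank(z_j·H(0) - H(1)) = M - 1, i.e., each z_j is a generalized eigenvalue of the pencil. -/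
open Finset Matrix

/-! The pencil value `z_j • H(0) - H(1)` is the Hankel matrix of
`k ↦ ∑ₘ (z_j - z_m) γ_m z_m ^ k`, so it factors as `V diag((z_j - z_m) γ_m) Wᵀ` with tall
Vandermonde matrices `V`, `W`. The upper `M × M` block of `V` and of `W` is the invertible square
Vandermonde matrix of the distinct `z_m`, so the factorization has exactly the rank of its
diagonal factor, whose only zero entry is at `m = j`. -/

namespace Matrix

variable {R K : Type*} {M : ℕ}

def vandermondeCols [CommSemiring R] (n : ℕ) (z : Fin M → R) : Matrix (Fin n) (Fin M) R :=
  of fun ℓ m => z m ^ (ℓ : ℕ)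

@[simp]
theorem vandermondeCols_apply [CommSemiring R] (n : ℕ) (z : Fin M → R) (ℓ : Fin n)
    (m : Fin M) :
    vandermondeCols n z ℓ m = z m ^ (ℓ : ℕ) := rfl

theorem vandermondeCols_submatrix_castLE [CommRing R] {n : ℕ} (z : Fin M → R) (h : M ≤ n) :
    (vandermondeCols n z).submatrix (Fin.castLE h) id = (vandermonde z)ᵀ := by
  ext; simp [vandermonde_apply]

theorem of_sum_mul_pow_add_eq_vandermondeCols_mul [CommSemiring R] (n p : ℕ) (c z : Fin M → R) :
    of (fun (ℓ : Fin n) (k : Fin p) => ∑ m, c m * z m ^ ((k : ℕ) + ℓ)) =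
      vandermondeCols n z * diagonal c * (vandermondeCols p z)ᵀ := by
  ext ℓ k
  simp only [of_apply, mul_apply, diagonal_apply, transpose_apply, vandermondeCols_apply, mul_ite,
    mul_zero, sum_ite_eq', mem_univ, if_true]
  exact sum_congr rfl fun m _ => by ring

theorem rank_vandermondeCols_mul_diagonal_mul_transpose [Field K] {n p : ℕ} {z : Fin M → K}
    (hz : Function.Injective z) (hn : M ≤ n) (hp : M ≤ p) (d : Fin M → K) :
    (vandermondeCols n z * diagonal d * (vandermondeCols p z)ᵀ).rank = (diagonal d).rank := by
  refine le_antisymm ((rank_mul_le_left _ _).trans (rank_mul_le_right _ _)) ?_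
  have hV : IsUnit (vandermonde z).det := (det_vandermonde_ne_zero_iff.2 hz).isUnit
  have hsub : (vandermondeCols n z * diagonal d * (vandermondeCols p z)ᵀ).submatrix
      (Fin.castLE hn) (Fin.castLE hp) = (vandermonde z)ᵀ * diagonal d * vandermonde z := by
    rw [submatrix_mul _ _ _ id _ Function.bijective_id,
      submatrix_mul _ _ _ id _ Function.bijective_id, vandermondeCols_submatrix_castLE,
      ← transpose_submatrix, vandermondeCols_submatrix_castLE, transpose_transpose,
      submatrix_id_id]
  calc (diagonal d).rank = ((vandermonde z)ᵀ * diagonal d * vandermonde z).rank := by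
        rw [rank_mul_eq_left_of_isUnit_det _ _ hV,
          rank_mul_eq_right_of_isUnit_det _ _ (by rwa [det_transpose])]
    _ ≤ _ := hsub ▸ rank_submatrix_le _ _ _

end Matrix

theorem rank_diagonal_sub_mul {K : Type*} [Field K] {M : ℕ} {γ z : Fin M → K}
    (hγ : ∀ j, γ j ≠ 0) (hz : Function.Injective z) (j : Fin M) :
    (diagonal fun m => (z j - z m) * γ m).rank = M - 1 := by
  classical
  have hsupp : ∀ m, (z j - z m) * γ m ≠ 0 ↔ m ≠ j := fun m => by
    simp [hγ m, sub_eq_zero, hz.eq_iff, eq_comm]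
  rw [rank_diagonal]
  simp_rw [hsupp]
  simp

theorem hankel_pencil_eigenvalues_general (M N L : ℕ) (hML : M ≤ L) (hLN : L ≤ N)
    (γ z : Fin M → ℂ) (hγ : ∀ j, γ j ≠ 0)
    (hzinj : Function.Injective z)
    (f : ℕ → ℂ) (hf : ∀ k, f k = ∑ j, γ j * z j ^ k)
    (H0 H1 : Matrix (Fin (2 * N - L)) (Fin L) ℂ)
    (hH0 : ∀ ℓ k, H0 ℓ k = f ((k : ℕ) + (ℓ : ℕ)))
    (hH1 : ∀ ℓ k, H1 ℓ k = f ((k : ℕ) + (ℓ : ℕ) + 1)) :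
    ∀ j, (z j • H0 - H1).rank = M - 1 := by
  intro j
  have hpencil : z j • H0 - H1 = vandermondeCols (2 * N - L) z *
      diagonal (fun m => (z j - z m) * γ m) * (vandermondeCols L z)ᵀ := by
    rw [← of_sum_mul_pow_add_eq_vandermondeCols_mul]
    ext ℓ k
    simp only [Matrix.sub_apply, Matrix.smul_apply, smul_eq_mul, of_apply, hH0, hH1, hf, mul_sum,
      ← sum_sub_distrib]
    exact sum_congr rfl fun m _ => by ring
  rw [hpencil, rank_vandermondeCols_mul_diagonal_mul_transpose hzinj (by omega) hML,
    rank_diagonal_sub_mul hγ hzinj]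

theorem hankel_pencil_eigenvalues (M N L : ℕ) (hML : M ≤ L) (hLN : L ≤ N)
    (γ z : Fin M → ℂ) (hγ : ∀ j, γ j ≠ 0) (hz0 : ∀ j, z j ≠ 0)
    (hzinj : Function.Injective z)
    (f : ℕ → ℂ) (hf : ∀ k, f k = ∑ j, γ j * z j ^ k)
    (H0 H1 : Matrix (Fin (2 * N - L)) (Fin L) ℂ)
    (hH0 : ∀ ℓ k, H0 ℓ k = f ((k : ℕ) + (ℓ : ℕ)))
    (hH1 : ∀ ℓ k, H1 ℓ k = f ((k : ℕ) + (ℓ : ℕ) + 1)) :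
    ∀ j, (z j • H0 - H1).rank = M - 1 :=
  hankel_pencil_eigenvalues_general M N L hML hLN γ z hγ hzinj f hf H0 H1 hH0 hH1
end
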